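/- arXiv:2402.13580 — 4 statements merged into one kernel-verified Lean document; each statement's English description precedes it below -/
import Mathlib

section
/- Let ρ be a dissectible solution notion and f : Θ → X a social choice function. Then the canonical semi-operator γ^{(ρ,f)} is an operator: for every nonempty E ⊆ Θ and all θ, θ' ∈ E, one has θ ∈ γ^{(ρ,f)}[E,θ] ⊆ E, and θ' ∈ γ^{(ρ,f)}[E,θ] implies γ^{(ρ,f)}[E,θ'] = γ^{(ρ,f)}[E,θ]. -/
open scoped Classical

namespace SeqMech

variable {I : Type*} {Θi : I → Type*} {X : Type*}

/-- Projection of a set of states onto agent `i`'s coordinate. -/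
def proj (i : I) (E : Set (∀ j, Θi j)) : Set (Θi i) :=
  (fun θ => θ i) '' E

/-- Projection of a set of states onto the coordinates of the agents other than `i`. -/
def projNeg (i : I) (E : Set (∀ j, Θi j)) :
    Set (∀ j : {j : I // j ≠ i}, Θi j.1) :=
  (fun θ (j : {j : I // j ≠ i}) => θ j.1) '' E

/-- The semi-operator property: nonempty sets are mapped to nonempty sets. -/
def IsSemiOp (γ : Set (∀ j, Θi j) → (∀ j, Θi j) → Set (∀ j, Θi j)) : Prop :=
  ∀ E θ, E.Nonempty → (γ E θ).Nonempty

/-- A solution notion: `R f γ E θ θ' i Fhat` means `ρ[f,(γ,E),θ,θ',i,Fhat] = 1`.  Its value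
depends only on `(f, γ_i[E,θ], θ_i, θ'_i, Fhat_{-i})`. -/
structure SolutionNotion (I : Type*) (Θi : I → Type*) (X : Type*) where
  R : ((∀ j, Θi j) → X) →
      (Set (∀ j, Θi j) → (∀ j, Θi j) → Set (∀ j, Θi j)) →
      Set (∀ j, Θi j) → (∀ j, Θi j) → (∀ j, Θi j) → I → Set (∀ j, Θi j) → Prop
  meas : ∀ f γ γ' E E' θ τ θ' τ' (i : I) Fhat Fhat',
      proj i (γ E θ) = proj i (γ' E' τ) →
      θ i = τ i → θ' i = τ' i →
      projNeg i Fhat = projNeg i Fhat' →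
      (R f γ E θ θ' i Fhat ↔ R f γ' E' τ τ' i Fhat')

/-- Dissectibility of a solution notion. -/
def Dissectible (ρ : SolutionNotion I Θi X) : Prop :=
  ∀ f γ E θ θ' (i : I) Fhat,
    IsSemiOp γ → E.Nonempty → θ ∈ E → θ' ∈ E →
    (¬ ρ.R f γ E θ θ' i Fhat ↔
      ∃ τ ∈ γ E θ, ∃ γ' : Set (∀ j, Θi j) → (∀ j, Θi j) → Set (∀ j, Θi j),
        IsSemiOp γ' ∧ γ' E θ = {θ, τ} ∧ ¬ ρ.R f γ' E θ θ' i Fhat)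

/-- `θ >_i^{[(ρ,f),(γ,E)]} θ'`. -/
def gtRel (ρ : SolutionNotion I Θi X) (f : (∀ j, Θi j) → X)
    (γ : Set (∀ j, Θi j) → (∀ j, Θi j) → Set (∀ j, Θi j))
    (E : Set (∀ j, Θi j)) (i : I) (θ θ' : ∀ j, Θi j) : Prop :=
  θ ∈ E ∧ θ' ∈ E ∧ ¬ ρ.R f γ E θ θ' i E

/-- `θ ∼_i^{[(ρ,f),(γ,E)]} θ'`. -/
def simRel (ρ : SolutionNotion I Θi X) (f : (∀ j, Θi j) → X)
    (γ : Set (∀ j, Θi j) → (∀ j, Θi j) → Set (∀ j, Θi j))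
    (E : Set (∀ j, Θi j)) (i : I) (θ θ' : ∀ j, Θi j) : Prop :=
  θ i = θ' i ∨ gtRel ρ f γ E i θ θ' ∨ gtRel ρ f γ E i θ' θ

/-- `canonN ρ f n` is the semi-operator `γ^{(ρ,f)-(n+1)}`. -/
noncomputable def canonN (ρ : SolutionNotion I Θi X) (f : (∀ j, Θi j) → X) :
    ℕ → Set (∀ j, Θi j) → (∀ j, Θi j) → Set (∀ j, Θi j)
  | 0 => fun E θ => if θ ∈ E then {θ} else E
  | n + 1 => fun E θ =>
      if θ ∈ E then
        ⋃ τ ∈ canonN ρ f n E θ,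
          {θ' ∈ E | ∀ i, simRel ρ f (canonN ρ f n) E i τ θ'}
      else E

/-- The canonical semi-operator `γ^{(ρ,f)}`. -/
noncomputable def canon (ρ : SolutionNotion I Θi X) (f : (∀ j, Θi j) → X) :
    Set (∀ j, Θi j) → (∀ j, Θi j) → Set (∀ j, Θi j) :=
  fun E θ => if θ ∈ E then ⋃ n, canonN ρ f n E θ else E

/-! The stages `γ^{(ρ,f)-(n)}` increase with `n`: by dissectibility, `θ >_i θ'` only needs a single
witness in `γ_i[E,θ]`, so enlarging the semi-operator preserves every `>_i`, hence every `∼_i`.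
Consequently `γ^{(ρ,f)}[E,θ]` is the class of `θ` under the reflexive-transitive closure of the
symmetric relation "linked at some stage", which is an equivalence relation on `E`. -/

open Relation

variable (ρ : SolutionNotion I Θi X) (f : (∀ j, Θi j) → X) in
def CanonLinked (E : Set (∀ j, Θi j)) (θ θ' : ∀ j, Θi j) : Prop :=
  θ ∈ E ∧ θ' ∈ E ∧ ∃ n, ∀ i, simRel ρ f (canonN ρ f n) E i θ θ'

section Monotone

variable {ρ : SolutionNotion I Θi X} {f : (∀ j, Θi j) → X}
  {γ₁ γ₂ : Set (∀ j, Θi j) → (∀ j, Θi j) → Set (∀ j, Θi j)} {E : Set (∀ j, Θi j)}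

theorem Dissectible.not_R_mono (hρ : Dissectible ρ) (h₁ : IsSemiOp γ₁) (h₂ : IsSemiOp γ₂)
    {θ θ' : ∀ j, Θi j} {i : I} {Fhat : Set (∀ j, Θi j)} (hθ : θ ∈ E) (hθ' : θ' ∈ E)
    (hsub : γ₁ E θ ⊆ γ₂ E θ) (h : ¬ ρ.R f γ₁ E θ θ' i Fhat) : ¬ ρ.R f γ₂ E θ θ' i Fhat := by
  have hE : E.Nonempty := ⟨θ, hθ⟩
  obtain ⟨τ, hτ, γ', hγ'⟩ := (hρ f γ₁ E θ θ' i Fhat h₁ hE hθ hθ').1 h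
  exact (hρ f γ₂ E θ θ' i Fhat h₂ hE hθ hθ').2 ⟨τ, hsub hτ, γ', hγ'⟩

theorem gtRel_mono (hρ : Dissectible ρ) (h₁ : IsSemiOp γ₁) (h₂ : IsSemiOp γ₂) {i : I}
    {θ θ' : ∀ j, Θi j} (hsub : γ₁ E θ ⊆ γ₂ E θ) (h : gtRel ρ f γ₁ E i θ θ') :
    gtRel ρ f γ₂ E i θ θ' :=
  ⟨h.1, h.2.1, hρ.not_R_mono h₁ h₂ h.1 h.2.1 hsub h.2.2⟩

theorem simRel_mono (hρ : Dissectible ρ) (h₁ : IsSemiOp γ₁) (h₂ : IsSemiOp γ₂) {i : I}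
    {θ θ' : ∀ j, Θi j} (hsub : ∀ x, γ₁ E x ⊆ γ₂ E x) (h : simRel ρ f γ₁ E i θ θ') :
    simRel ρ f γ₂ E i θ θ' :=
  h.imp_right <| Or.imp (gtRel_mono hρ h₁ h₂ (hsub θ)) (gtRel_mono hρ h₁ h₂ (hsub θ'))

end Monotone

namespace canonN

variable {ρ : SolutionNotion I Θi X} {f : (∀ j, Θi j) → X} {E : Set (∀ j, Θi j)}
  {θ θ' : ∀ j, Θi j}

theorem zero_of_mem (hθ : θ ∈ E) : canonN ρ f 0 E θ = {θ} := if_pos hθ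

theorem of_notMem (n : ℕ) (hθ : θ ∉ E) : canonN ρ f n E θ = E := by
  cases n <;> simp [canonN, hθ]

theorem mem_succ_iff {n : ℕ} (hθ : θ ∈ E) :
    θ' ∈ canonN ρ f (n + 1) E θ ↔
      ∃ τ ∈ canonN ρ f n E θ, θ' ∈ E ∧ ∀ i, simRel ρ f (canonN ρ f n) E i τ θ' := by
  simp only [canonN, if_pos hθ, Set.mem_iUnion, Set.mem_sep_iff, exists_prop]

theorem self_mem (n : ℕ) (hθ : θ ∈ E) : θ ∈ canonN ρ f n E θ := by
  cases n with
  | zero => simp [zero_of_mem hθ]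
  | succ n => exact (mem_succ_iff hθ).2 ⟨θ, self_mem n hθ, hθ, fun _ => Or.inl rfl⟩

theorem subset (n : ℕ) (hθ : θ ∈ E) : canonN ρ f n E θ ⊆ E := by
  cases n with
  | zero => simpa [zero_of_mem hθ]
  | succ n =>
    intro θ' hθ'
    obtain ⟨-, -, hθ'E, -⟩ := (mem_succ_iff hθ).1 hθ'
    exact hθ'E

theorem isSemiOp (n : ℕ) : IsSemiOp (canonN ρ f n) := by
  intro E θ hE
  by_cases hθ : θ ∈ E
  · exact ⟨θ, self_mem n hθ⟩
  · rwa [of_notMem n hθ]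

theorem subset_succ (hρ : Dissectible ρ) (n : ℕ) (E : Set (∀ j, Θi j)) :
    ∀ θ, canonN ρ f n E θ ⊆ canonN ρ f (n + 1) E θ := by
  intro θ
  by_cases hθ : θ ∈ E
  swap
  · rw [of_notMem n hθ, of_notMem (n + 1) hθ]
  cases n with
  | zero => simpa [zero_of_mem hθ] using self_mem 1 hθ
  | succ n =>
    intro θ' hθ'
    obtain ⟨τ, hτ, hθ'E, hsim⟩ := (mem_succ_iff hθ).1 hθ'
    exact (mem_succ_iff hθ).2 ⟨τ, subset_succ hρ n E θ hτ, hθ'E,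
      fun i => simRel_mono hρ (isSemiOp n) (isSemiOp (n + 1)) (subset_succ hρ n E) (hsim i)⟩

theorem monotone (hρ : Dissectible ρ) (E : Set (∀ j, Θi j)) (θ : ∀ j, Θi j) :
    Monotone (fun n => canonN ρ f n E θ) :=
  monotone_nat_of_le_succ fun n => subset_succ hρ n E θ

theorem simRel_of_le (hρ : Dissectible ρ) {m n : ℕ} (hmn : m ≤ n) {i : I}
    (h : simRel ρ f (canonN ρ f m) E i θ θ') : simRel ρ f (canonN ρ f n) E i θ θ' :=
  simRel_mono hρ (isSemiOp m) (isSemiOp n) (fun x => monotone hρ E x hmn) h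

end canonN

section Canon

variable {ρ : SolutionNotion I Θi X} {f : (∀ j, Θi j) → X} {E : Set (∀ j, Θi j)}
  {θ θ' : ∀ j, Θi j}

instance : Std.Symm (CanonLinked ρ f E) where
  symm _ _ := fun ⟨hθ, hθ', n, hsim⟩ =>
    ⟨hθ', hθ, n, fun i => (hsim i).imp Eq.symm Or.symm⟩

theorem reflTransGen_of_mem_canonN (hθ : θ ∈ E) {n : ℕ} (h : θ' ∈ canonN ρ f n E θ) :
    ReflTransGen (CanonLinked ρ f E) θ θ' := by
  induction n generalizing θ' with
  | zero => rw [canonN.zero_of_mem hθ] at h; exact h ▸ .refl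
  | succ n ih =>
    obtain ⟨τ, hτ, hθ'E, hsim⟩ := (canonN.mem_succ_iff hθ).1 h
    exact (ih hτ).tail ⟨canonN.subset n hθ hτ, hθ'E, n, hsim⟩

theorem exists_mem_canonN_of_reflTransGen (hρ : Dissectible ρ) (hθ : θ ∈ E)
    (h : ReflTransGen (CanonLinked ρ f E) θ θ') : ∃ n, θ' ∈ canonN ρ f n E θ := by
  induction h with
  | refl => exact ⟨0, canonN.self_mem 0 hθ⟩
  | @tail τ θ' _ hlink ih =>
    obtain ⟨n, hτ⟩ := ih
    obtain ⟨-, hθ'E, m, hsim⟩ := hlink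
    exact ⟨max n m + 1, (canonN.mem_succ_iff hθ).2 ⟨τ, canonN.monotone hρ E θ (le_max_left n m) hτ,
      hθ'E, fun i => canonN.simRel_of_le hρ (le_max_right n m) (hsim i)⟩⟩

theorem canon_eq_setOf_reflTransGen (hρ : Dissectible ρ) (hθ : θ ∈ E) :
    canon ρ f E θ = {θ' | ReflTransGen (CanonLinked ρ f E) θ θ'} := by
  ext θ'
  simp only [canon, if_pos hθ, Set.mem_iUnion, Set.mem_ofPred_eq]
  exact ⟨fun ⟨_, h⟩ => reflTransGen_of_mem_canonN hθ h, exists_mem_canonN_of_reflTransGen hρ hθ⟩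

theorem mem_of_reflTransGen_canonLinked (hθ : θ ∈ E)
    (h : ReflTransGen (CanonLinked ρ f E) θ θ') : θ' ∈ E := by
  induction h with
  | refl => exact hθ
  | tail _ hlink => exact hlink.2.1

end Canon

theorem canon_isOperator_general
    (ρ : SolutionNotion I Θi X) (hρ : Dissectible ρ) (f : (∀ j, Θi j) → X)
    (E : Set (∀ j, Θi j))
    (θ θ' : ∀ j, Θi j) (hθ : θ ∈ E) (hθ' : θ' ∈ E) :
    θ ∈ canon ρ f E θ ∧ canon ρ f E θ ⊆ E ∧
      (θ' ∈ canon ρ f E θ → canon ρ f E θ' = canon ρ f E θ) := by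
  rw [canon_eq_setOf_reflTransGen hρ hθ, canon_eq_setOf_reflTransGen hρ hθ']
  refine ⟨.refl, fun _ => mem_of_reflTransGen_canonLinked hθ, fun hθθ' => ?_⟩
  ext θ''
  exact ⟨fun h => hθθ'.trans h, fun h => (Std.Symm.symm _ _ hθθ').trans h⟩

/-- for a dissectible solution notion `ρ` and an SCF `f`, the canonical
semi-operator `γ^{(ρ,f)}` is an operator. -/
theorem canon_isOperator
    [Fintype I] [Nonempty I] [∀ i, Fintype (Θi i)] [∀ i, Nonempty (Θi i)]
    (ρ : SolutionNotion I Θi X) (hρ : Dissectible ρ) (f : (∀ j, Θi j) → X)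
    (E : Set (∀ j, Θi j)) (hE : E.Nonempty)
    (θ θ' : ∀ j, Θi j) (hθ : θ ∈ E) (hθ' : θ' ∈ E) :
    θ ∈ canon ρ f E θ ∧ canon ρ f E θ ⊆ E ∧
      (θ' ∈ canon ρ f E θ → canon ρ f E θ' = canon ρ f E θ) :=
  canon_isOperator_general ρ hρ f E θ θ' hθ hθ'

end SeqMech
end

section
/- Let ρ be a dissectible solution notion and f : Θ → X a social choice function. Then γ^{(ρ,f)} is (ρ,f,ϑ*)-consistent on product sets: for every E ∈ 𝒮 of the form E = ∏_{i∈I} E_i with each E_i a nonempty subset of Θ_i, all θ, θ' ∈ E and every i ∈ I, if ρ[f,(γ^{(ρ,f)},E),θ,θ',i,E] = 0 then θ'_i ∈ γ^{(ρ,f)}_i[E,θ]. -/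
/-!
Dissectibility says that a failure of `ρ` at `(canon ρ f, E)` is witnessed by a single state `τ`
of `canon ρ f E θ`, hence of some finite stage `canonN ρ f n E θ`; read backwards, it turns this
witness into a failure at that stage. Since `ρ` sees only the `i`-th coordinate of `θ'`, we may
replace `θ'` by `θ` with its `i`-th coordinate set to `θ' i`, which lies in `E` because `E` is a
product. This state agrees with `θ` off `i` and is `>_i`-below `θ` at stage `n`, so it enters
stage `n + 1`.
-/

open scoped Classical

namespace SeqMech

variable {I : Type*} {Θi : I → Type*} {X : Type*}

theorem SolutionNotion.R_congr_target (ρ : SolutionNotion I Θi X) {f : (∀ j, Θi j) → X}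
    {γ : Set (∀ j, Θi j) → (∀ j, Θi j) → Set (∀ j, Θi j)} {E F : Set (∀ j, Θi j)}
    {θ θ' τ' : ∀ j, Θi j} {i : I} (h : θ' i = τ' i) :
    ρ.R f γ E θ θ' i F ↔ ρ.R f γ E θ τ' i F :=
  ρ.meas f γ γ E E θ θ θ' τ' i F F rfl rfl h rfl

section Canon

variable (ρ : SolutionNotion I Θi X) (f : (∀ j, Θi j) → X) {E : Set (∀ j, Θi j)}
  {θ : ∀ j, Θi j}

theorem self_mem_canonN (n : ℕ) (hθ : θ ∈ E) : θ ∈ canonN ρ f n E θ := by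
  induction n with
  | zero => simp [canonN, hθ]
  | succ n ih =>
    simp only [canonN, if_pos hθ]
    exact Set.mem_biUnion ih ⟨hθ, fun _ => Or.inl rfl⟩

theorem canonN_of_notMem (n : ℕ) (hθ : θ ∉ E) : canonN ρ f n E θ = E := by
  cases n <;> simp [canonN, hθ]

theorem isSemiOp_canonN (n : ℕ) : IsSemiOp (canonN ρ f n) := by
  intro F σ hF
  by_cases hσ : σ ∈ F
  · exact ⟨σ, self_mem_canonN ρ f n hσ⟩
  · rwa [canonN_of_notMem ρ f n hσ]

theorem canon_of_mem (hθ : θ ∈ E) : canon ρ f E θ = ⋃ n, canonN ρ f n E θ :=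
  if_pos hθ

theorem isSemiOp_canon : IsSemiOp (canon ρ f) := by
  intro F σ hF
  by_cases hσ : σ ∈ F
  · exact ⟨σ, (canon_of_mem ρ f hσ).symm ▸ Set.mem_iUnion.mpr ⟨0, self_mem_canonN ρ f 0 hσ⟩⟩
  · simpa [canon, hσ] using hF

theorem update_mem_canonN_succ {n : ℕ} {i : I} {a : Θi i} (hθ : θ ∈ E)
    (hE : Function.update θ i a ∈ E)
    (hR : ¬ ρ.R f (canonN ρ f n) E θ (Function.update θ i a) i E) :
    Function.update θ i a ∈ canonN ρ f (n + 1) E θ := by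
  simp only [canonN, if_pos hθ]
  refine Set.mem_biUnion (self_mem_canonN ρ f n hθ) ⟨hE, fun j => ?_⟩
  by_cases hji : j = i
  · subst hji
    exact Or.inr (Or.inl ⟨hθ, hE, hR⟩)
  · exact Or.inl (Function.update_of_ne hji _ _).symm

theorem Dissectible.exists_not_R_canonN {ρ : SolutionNotion I Θi X} (hρ : Dissectible ρ)
    {θ' : ∀ j, Θi j} {i : I} {F : Set (∀ j, Θi j)} (hθ : θ ∈ E) (hθ' : θ' ∈ E)
    (h : ¬ ρ.R f (canon ρ f) E θ θ' i F) :
    ∃ n, ¬ ρ.R f (canonN ρ f n) E θ θ' i F := by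
  obtain ⟨τ, hτ, γ', hγ', hγ'E, hR⟩ :=
    (hρ f (canon ρ f) E θ θ' i F (isSemiOp_canon ρ f) ⟨θ, hθ⟩ hθ hθ').mp h
  obtain ⟨n, hτn⟩ := Set.mem_iUnion.mp (canon_of_mem ρ f hθ ▸ hτ)
  exact ⟨n, (hρ f (canonN ρ f n) E θ θ' i F (isSemiOp_canonN ρ f n) ⟨θ, hθ⟩ hθ hθ').mpr
    ⟨τ, hτn, γ', hγ', hγ'E, hR⟩⟩

end Canon

theorem canon_consistent_general
    (ρ : SolutionNotion I Θi X) (hρ : Dissectible ρ) (f : (∀ j, Θi j) → X)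
    (Ei : ∀ i, Set (Θi i))
    (E : Set (∀ j, Θi j)) (hE : E = Set.pi Set.univ Ei)
    (θ θ' : ∀ j, Θi j) (hθ : θ ∈ E) (hθ' : θ' ∈ E) (i : I)
    (h0 : ¬ ρ.R f (canon ρ f) E θ θ' i E) :
    θ' i ∈ proj i (canon ρ f E θ) := by
  set θ'' := Function.update θ i (θ' i)
  have hθ''i : θ'' i = θ' i := Function.update_self i (θ' i) θ
  have hθ''E : θ'' ∈ E := by
    subst hE
    exact (Set.update_mem_pi_iff_of_mem hθ).mpr fun _ => hθ' i trivial
  have h0'' : ¬ ρ.R f (canon ρ f) E θ θ'' i E := by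
    rwa [ρ.R_congr_target hθ''i]
  obtain ⟨n, hn⟩ := hρ.exists_not_R_canonN f hθ hθ''E h0''
  have hmem : θ'' ∈ canonN ρ f (n + 1) E θ := update_mem_canonN_succ ρ f hθ hθ''E hn
  exact ⟨θ'', canon_of_mem ρ f hθ ▸ Set.mem_iUnion.mpr ⟨n + 1, hmem⟩, hθ''i⟩

/-- for a dissectible solution notion `ρ` and an SCF `f`, the canonical
semi-operator `γ^{(ρ,f)}` is `(ρ,f,ϑ*)`-consistent on product sets. -/
theorem canon_consistent
    [Fintype I] [Nonempty I] [∀ i, Fintype (Θi i)] [∀ i, Nonempty (Θi i)]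
    (ρ : SolutionNotion I Θi X) (hρ : Dissectible ρ) (f : (∀ j, Θi j) → X)
    (Ei : ∀ i, Set (Θi i)) (hEi : ∀ i, (Ei i).Nonempty)
    (E : Set (∀ j, Θi j)) (hE : E = Set.pi Set.univ Ei)
    (θ θ' : ∀ j, Θi j) (hθ : θ ∈ E) (hθ' : θ' ∈ E) (i : I)
    (h0 : ¬ ρ.R f (canon ρ f) E θ θ' i E) :
    θ' i ∈ proj i (canon ρ f E θ) :=
  canon_consistent_general ρ hρ f Ei E hE θ θ' hθ hθ' i h0

end SeqMech
end

section
/- Let ρ be a dissectible solution notion. Then for every social choice function f : Θ → X, all semi-operators γ and γ̄, all nonempty E, Ē ⊆ Θ, all θ, θ' with θ, θ' ∈ E and θ, θ' ∈ Ē, every i ∈ I and every Ê ⊆ Θ: if γ[E,θ] ⊆ γ̄[Ē,θ] and ρ[f,(γ,E),θ,θ',i,Ê] = 0, then ρ[f,(γ̄,Ē),θ,θ',i,Ê] = 0. -/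
open scoped Classical

namespace SeqMech

variable {I : Type*} {Θi : I → Type*} {X : Type*}

noncomputable def pinnedOp (E₀ : Set (∀ j, Θi j)) (θ₀ : ∀ j, Θi j) (S : Set (∀ j, Θi j)) :
    Set (∀ j, Θi j) → (∀ j, Θi j) → Set (∀ j, Θi j) :=
  fun F σ => if F = E₀ ∧ σ = θ₀ then S else F

theorem pinnedOp_self (E₀ : Set (∀ j, Θi j)) (θ₀ : ∀ j, Θi j) (S : Set (∀ j, Θi j)) :
    pinnedOp E₀ θ₀ S E₀ θ₀ = S :=
  if_pos ⟨rfl, rfl⟩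

theorem isSemiOp_pinnedOp {S : Set (∀ j, Θi j)} (hS : S.Nonempty)
    (E₀ : Set (∀ j, Θi j)) (θ₀ : ∀ j, Θi j) : IsSemiOp (pinnedOp E₀ θ₀ S) := by
  intro F σ hF
  unfold pinnedOp
  split_ifs
  exacts [hS, hF]

theorem SolutionNotion.R_iff_of_apply_eq (ρ : SolutionNotion I Θi X) (f : (∀ j, Θi j) → X)
    {γ γ' : Set (∀ j, Θi j) → (∀ j, Θi j) → Set (∀ j, Θi j)} {E E' : Set (∀ j, Θi j)}
    {θ : ∀ j, Θi j} (h : γ E θ = γ' E' θ) (θ' : ∀ j, Θi j) (i : I) (Fhat : Set (∀ j, Θi j)) :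
    ρ.R f γ E θ θ' i Fhat ↔ ρ.R f γ' E' θ θ' i Fhat :=
  ρ.meas f γ γ' E E' θ θ θ' θ' i Fhat Fhat (congrArg (proj i) h) rfl rfl rfl

/-- Since `ρ` sees the operator only through its value at `(E, θ)`, the two-point witness
`{θ, τ}` is realised at `(E', θ)` by `pinnedOp`, and dissectibility applies there. -/
theorem Dissectible.not_R_of_pair {ρ : SolutionNotion I Θi X} (hρ : Dissectible ρ)
    (f : (∀ j, Θi j) → X) {γ₀ γ' : Set (∀ j, Θi j) → (∀ j, Θi j) → Set (∀ j, Θi j)}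
    (hγ' : IsSemiOp γ') {E E' : Set (∀ j, Θi j)} (hE' : E'.Nonempty) {θ θ' τ : ∀ j, Θi j}
    (hθE' : θ ∈ E') (hθ'E' : θ' ∈ E') (hτ : τ ∈ γ' E' θ) (hγ₀ : γ₀ E θ = {θ, τ})
    {i : I} {Fhat : Set (∀ j, Θi j)} (hR : ¬ ρ.R f γ₀ E θ θ' i Fhat) :
    ¬ ρ.R f γ' E' θ θ' i Fhat := by
  have hpin : γ₀ E θ = pinnedOp E' θ {θ, τ} E' θ := by rw [hγ₀, pinnedOp_self]
  refine (hρ f γ' E' θ θ' i Fhat hγ' hE' hθE' hθ'E').mpr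
    ⟨τ, hτ, pinnedOp E' θ {θ, τ}, isSemiOp_pinnedOp (Set.insert_nonempty θ {τ}) E' θ,
      pinnedOp_self E' θ _, ?_⟩
  rwa [← ρ.R_iff_of_apply_eq f hpin]

theorem dissectible_mono_in_operator_general
    (ρ : SolutionNotion I Θi X) (hρ : Dissectible ρ) (f : (∀ j, Θi j) → X)
    (γ γ' : Set (∀ j, Θi j) → (∀ j, Θi j) → Set (∀ j, Θi j))
    (hγ : IsSemiOp γ) (hγ' : IsSemiOp γ')
    (E E' : Set (∀ j, Θi j)) (hE : E.Nonempty) (hE' : E'.Nonempty)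
    (θ θ' : ∀ j, Θi j) (hθE : θ ∈ E) (hθ'E : θ' ∈ E)
    (hθE' : θ ∈ E') (hθ'E' : θ' ∈ E')
    (i : I) (Fhat : Set (∀ j, Θi j))
    (hsub : γ E θ ⊆ γ' E' θ)
    (h0 : ¬ ρ.R f γ E θ θ' i Fhat) :
    ¬ ρ.R f γ' E' θ θ' i Fhat := by
  obtain ⟨τ, hτ, γ₀, -, hγ₀, hR⟩ := (hρ f γ E θ θ' i Fhat hγ hE hθE hθ'E).mp h0
  exact hρ.not_R_of_pair f hγ' hE' hθE' hθ'E' (hsub hτ) hγ₀ hR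

/-- for a dissectible solution notion, if `γ[E,θ] ⊆ γ̄[Ē,θ]` and
`ρ[f,(γ,E),θ,θ',i,Ê] = 0`, then `ρ[f,(γ̄,Ē),θ,θ',i,Ê] = 0`. -/
theorem dissectible_mono_in_operator
    [Fintype I] [Nonempty I] [∀ i, Fintype (Θi i)] [∀ i, Nonempty (Θi i)]
    (ρ : SolutionNotion I Θi X) (hρ : Dissectible ρ) (f : (∀ j, Θi j) → X)
    (γ γ' : Set (∀ j, Θi j) → (∀ j, Θi j) → Set (∀ j, Θi j))
    (hγ : IsSemiOp γ) (hγ' : IsSemiOp γ')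
    (E E' : Set (∀ j, Θi j)) (hE : E.Nonempty) (hE' : E'.Nonempty)
    (θ θ' : ∀ j, Θi j) (hθE : θ ∈ E) (hθ'E : θ' ∈ E)
    (hθE' : θ ∈ E') (hθ'E' : θ' ∈ E')
    (i : I) (Fhat : Set (∀ j, Θi j))
    (hsub : γ E θ ⊆ γ' E' θ)
    (h0 : ¬ ρ.R f γ E θ θ' i Fhat) :
    ¬ ρ.R f γ' E' θ θ' i Fhat :=
  dissectible_mono_in_operator_general ρ hρ f γ γ' hγ hγ' E E' hE hE' θ θ' hθE hθ'E hθE' hθ'E' i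
    Fhat hsub h0

end SeqMech
end

section
/- Let G be a mechanism with perfect recall and S a strategy profile in G. Then for every agent i ∈ I and all nonterminal histories h, h' ∈ ℋ∖𝒯 with φ(h) = φ(h') = i and ζ_i(h) = ζ_i(h'): if ℰ^{[G,S]-h} ≠ ∅ and ℰ^{[G,S]-h'} ≠ ∅, then ℰ_i^{[G,S]-h} = ℰ_i^{[G,S]-h'}. -/
/-! A state reaches `h` exactly when every agent's moves along `h` agree with their strategy
at that state. Given `θ` reaching `h` and `θ'` reaching `h'`, the state giving agent `i` the
type `θ i` and everybody else their type in `θ'` reaches `h'`: the others' moves along `h'`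
are unchanged, and by perfect recall each move of `i` along `h'` was also made by `i` on the
way to `h`, at a history in the same information set, where the strategy of type `θ i`
chose it. -/

namespace SeqMech

variable {I : Type*} {Θi : I → Type*} {A : Type*}

/-- A mechanism (a sequential-move game form): histories are lists of actions of
length at most `K`; `ℋ` contains the empty history and is prefix-closed; `player`
assigns the mover at each (nonterminal) history, and `info i` is agent `i`'s
information map `ζ_i`. -/
structure Mechanism (I : Type*) (A : Type*) where
  H : Set (List A)
  K : ℕ
  empty_mem : ([] : List A) ∈ H
  length_le : ∀ h ∈ H, h.length ≤ K
  prefix_closed : ∀ h ∈ H, ∀ h' : List A, h' <+: h → h' ∈ H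
  player : List A → I
  info : I → List A → List A
  actions_nonempty :
    ∀ h ∈ H, (∃ t ∈ H, h <+: t ∧ t ≠ h) → ∃ a : A, h ++ [a] ∈ H
  sim_actions :
    ∀ h ∈ H, ∀ h' ∈ H,
      (∃ t ∈ H, h <+: t ∧ t ≠ h) → (∃ t ∈ H, h' <+: t ∧ t ≠ h') →
      player h = player h' → info (player h) h = info (player h) h' →
      {a : A | h ++ [a] ∈ H} = {a : A | h' ++ [a] ∈ H}

/-- A terminal history: a history that is not a proper prefix of any history. -/
def Mechanism.Terminal (G : Mechanism I A) (h : List A) : Prop :=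
  h ∈ G.H ∧ ∀ h' ∈ G.H, h <+: h' → h' = h

/-- A behavior strategy of agent `i`: at each of `i`'s nonterminal histories it
chooses an available action, measurably with respect to `i`'s information sets. -/
structure BStrat (G : Mechanism I A) (i : I) where
  act : List A → A
  valid : ∀ h ∈ G.H, ¬ G.Terminal h → G.player h = i → h ++ [act h] ∈ G.H
  meas : ∀ h ∈ G.H, ∀ h' ∈ G.H, ¬ G.Terminal h → ¬ G.Terminal h' →
      G.player h = i → G.player h' = i → G.info i h = G.info i h' →
      act h = act h'

/-- `IsPlay G B t`: the terminal history `t` is the outcome `T^G(B)` of the behavior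
strategy profile `B`. -/
def IsPlay (G : Mechanism I A) (B : ∀ i, BStrat G i) (t : List A) : Prop :=
  G.Terminal t ∧
    ∀ h : List A, h <+: t → h ≠ t → h ++ [(B (G.player h)).act h] <+: t

/-- `ℰ^{[G,S]-h}`: the set of states `θ` at which `S(θ)` reaches (a history extending)
`h`, i.e. `h` is a prefix of `T^G(S(θ))`. -/
def reach (G : Mechanism I A) (S : ∀ i, Θi i → BStrat G i) (h : List A) :
    Set (∀ j, Θi j) :=
  {θ | ∃ t, IsPlay G (fun i => S i (θ i)) t ∧ h <+: t}

/-- Perfect recall. -/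
def PerfectRecall (G : Mechanism I A) : Prop :=
  ∀ h ∈ G.H, ∀ h' ∈ G.H, ∀ h'' ∈ G.H, ∀ a : A,
    G.player h = G.player h' → G.player h' = G.player h'' →
    ¬ G.Terminal h' → ¬ G.Terminal h'' →
    G.info (G.player h') h' = G.info (G.player h') h'' →
    (h ++ [a]) <+: h' →
    ∃ ht ∈ G.H, ¬ G.Terminal ht ∧ G.player ht = G.player h ∧
      G.info (G.player h) ht = G.info (G.player h) h ∧ (ht ++ [a]) <+: h''

theorem _root_.List.exists_concat_prefix_of_prefix_of_ne {α : Type*} {l₁ l₂ : List α}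
    (hp : l₁ <+: l₂) (hne : l₁ ≠ l₂) : ∃ a, l₁ ++ [a] <+: l₂ := by
  obtain ⟨_ | ⟨a, s⟩, rfl⟩ := hp
  · simp at hne
  · exact ⟨a, s, by simp⟩

theorem _root_.List.ne_of_concat_prefix {α : Type*} {l₁ l₂ : List α} {a : α}
    (h : l₁ ++ [a] <+: l₂) : l₁ ≠ l₂ := by
  rintro rfl
  simpa using h.length_le

theorem Mechanism.not_terminal_of_prefix_of_ne (G : Mechanism I A) {g h : List A}
    (hh : h ∈ G.H) (hgh : g <+: h) (hne : g ≠ h) : ¬ G.Terminal g :=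
  fun hg => hne (hg.2 h hh hgh).symm

def Follows {G : Mechanism I A} {i : I} (b : BStrat G i) (h : List A) : Prop :=
  ∀ g a, g ++ [a] <+: h → G.player g = i → b.act g = a

section Follows

variable {G : Mechanism I A}

theorem Follows.of_prefix {i : I} {b : BStrat G i} {g h : List A} (hb : Follows b h)
    (hgh : g <+: h) : Follows b g :=
  fun g' a hg' => hb g' a (hg'.trans hgh)

theorem follows_concat_iff {i : I} {b : BStrat G i} {h : List A} {a : A} :
    Follows b (h ++ [a]) ↔ Follows b h ∧ (G.player h = i → b.act h = a) := by
  refine ⟨fun hb => ⟨hb.of_prefix (List.prefix_append _ _), hb h a (List.prefix_refl _)⟩,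
    fun ⟨hb, hlast⟩ g c hg hgi => ?_⟩
  rcases List.prefix_concat_iff.mp hg with heq | hg
  · obtain ⟨rfl, hca⟩ := List.append_inj' heq rfl
    exact (hlast hgi).trans (List.singleton_inj.mp hca).symm
  · exact hb g c hg hgi

theorem follows_iff_act_eq {B : ∀ i, BStrat G i} {h : List A} :
    (∀ j, Follows (B j) h) ↔ ∀ g a, g ++ [a] <+: h → (B (G.player g)).act g = a :=
  ⟨fun hB g a hg => hB _ g a hg rfl, fun hB _ g a hg hgj => hgj ▸ hB g a hg⟩

theorem isPlay_iff {B : ∀ i, BStrat G i} {t : List A} :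
    IsPlay G B t ↔ G.Terminal t ∧ ∀ j, Follows (B j) t := by
  rw [follows_iff_act_eq]
  refine and_congr_right fun _ => ⟨fun hB g a hga => ?_, fun hB g hgt hne => ?_⟩
  · have hgt : g <+: t := (List.prefix_append _ _).trans hga
    simpa using List.prefix_of_prefix_length_le (hB g hgt (List.ne_of_concat_prefix hga)) hga (by simp)
  · obtain ⟨a, hga⟩ := List.exists_concat_prefix_of_prefix_of_ne hgt hne
    rwa [hB g a hga]

theorem exists_terminal_follows (B : ∀ i, BStrat G i) {g : List A} (hg : g ∈ G.H)
    (hB : ∀ j, Follows (B j) g) : ∃ t, G.Terminal t ∧ g <+: t ∧ ∀ j, Follows (B j) t := by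
  by_cases hterm : G.Terminal g
  · exact ⟨g, hterm, List.prefix_refl g, hB⟩
  have hnext := (B (G.player g)).valid g hg hterm rfl
  have hBnext : ∀ j, Follows (B j) (g ++ [(B (G.player g)).act g]) := fun j =>
    follows_concat_iff.mpr ⟨hB j, fun hgj => by subst hgj; rfl⟩
  obtain ⟨t, ht, hgt, hBt⟩ := exists_terminal_follows B hnext hBnext
  exact ⟨t, ht, (List.prefix_append _ _).trans hgt, hBt⟩
termination_by G.K - g.length
decreasing_by
  have := G.length_le _ hnext
  simp only [List.length_append, List.length_singleton] at this ⊢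
  omega

theorem mem_reach_iff {S : ∀ i, Θi i → BStrat G i} {h : List A} {θ : ∀ j, Θi j} :
    θ ∈ reach G S h ↔ h ∈ G.H ∧ ∀ j, Follows (S j (θ j)) h := by
  constructor
  · rintro ⟨t, hplay, hht⟩
    obtain ⟨hterm, hB⟩ := isPlay_iff.mp hplay
    exact ⟨G.prefix_closed t hterm.1 h hht, fun j => (hB j).of_prefix hht⟩
  · rintro ⟨hh, hB⟩
    obtain ⟨t, hterm, hht, hBt⟩ := exists_terminal_follows _ hh hB
    exact ⟨t, isPlay_iff.mpr ⟨hterm, hBt⟩, hht⟩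

theorem PerfectRecall.follows_of_info_eq (hPR : PerfectRecall G) {i : I} {b : BStrat G i}
    {h h' : List A} (hh : h ∈ G.H) (hh' : h' ∈ G.H)
    (hnt : ¬ G.Terminal h) (hnt' : ¬ G.Terminal h')
    (hp : G.player h = i) (hp' : G.player h' = i)
    (hinfo : G.info i h = G.info i h') (hb : Follows b h) : Follows b h' := by
  intro g a hga hgi
  have hgh' : g <+: h' := (List.prefix_append _ _).trans hga
  have hg : g ∈ G.H := G.prefix_closed h' hh' g hgh'
  have hgnt : ¬ G.Terminal g := G.not_terminal_of_prefix_of_ne hh' hgh'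
    (List.ne_of_concat_prefix hga)
  obtain ⟨g₀, hg₀, hg₀nt, hg₀p, hg₀info, hg₀a⟩ :=
    hPR g hg h' hh' h hh a (hgi.trans hp'.symm) (hp'.trans hp.symm) hnt' hnt
      (by rw [hp']; exact hinfo.symm) hga
  rw [hgi] at hg₀p hg₀info
  calc b.act g = b.act g₀ := b.meas g hg g₀ hg₀ hgnt hg₀nt hgi hg₀p hg₀info.symm
    _ = a := hb g₀ a hg₀a hg₀p

theorem PerfectRecall.image_reach_subset (hPR : PerfectRecall G) (S : ∀ i, Θi i → BStrat G i)
    {i : I} {h h' : List A} (hnt : ¬ G.Terminal h) (hnt' : ¬ G.Terminal h')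
    (hp : G.player h = i) (hp' : G.player h' = i) (hinfo : G.info i h = G.info i h')
    (hne' : (reach G S h').Nonempty) :
    (fun θ => θ i) '' reach G S h ⊆ (fun θ => θ i) '' reach G S h' := by
  classical
  rintro _ ⟨θ, hθ, rfl⟩
  obtain ⟨θ', hθ'⟩ := hne'
  rw [mem_reach_iff] at hθ hθ'
  refine ⟨Function.update θ' i (θ i), mem_reach_iff.mpr ⟨hθ'.1, fun j => ?_⟩, by simp⟩
  by_cases hj : j = i
  · subst hj
    simpa using hPR.follows_of_info_eq hθ.1 hθ'.1 hnt hnt' hp hp' hinfo (hθ.2 j)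
  · simpa [hj] using hθ'.2 j

end Follows

theorem perfectRecall_reach_proj_eq_general
    (G : Mechanism I A) (hPR : PerfectRecall G)
    (S : ∀ i, Θi i → BStrat G i) (i : I)
    (h h' : List A)
    (hnt : ¬ G.Terminal h) (hnt' : ¬ G.Terminal h')
    (hp : G.player h = i) (hp' : G.player h' = i)
    (hinfo : G.info i h = G.info i h')
    (hne : (reach G S h).Nonempty) (hne' : (reach G S h').Nonempty) :
    (fun θ => θ i) '' reach G S h = (fun θ => θ i) '' reach G S h' :=
  (hPR.image_reach_subset S hnt hnt' hp hp' hinfo hne').antisymm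
    (hPR.image_reach_subset S hnt' hnt hp' hp hinfo.symm hne)

/-- in a mechanism with perfect recall, if two nonterminal histories
`h, h'` of agent `i` lie in the same information set and both are reached at some
state under `S`, then agent `i` reveals the same set of types at `h` and at `h'`:
`ℰ_i^{[G,S]-h} = ℰ_i^{[G,S]-h'}`. -/
theorem perfectRecall_reach_proj_eq
    [Fintype I] [Nonempty I] [∀ i, Nonempty (Θi i)]
    (G : Mechanism I A) (hPR : PerfectRecall G)
    (S : ∀ i, Θi i → BStrat G i) (i : I)
    (h h' : List A) (hh : h ∈ G.H) (hh' : h' ∈ G.H)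
    (hnt : ¬ G.Terminal h) (hnt' : ¬ G.Terminal h')
    (hp : G.player h = i) (hp' : G.player h' = i)
    (hinfo : G.info i h = G.info i h')
    (hne : (reach G S h).Nonempty) (hne' : (reach G S h').Nonempty) :
    (fun θ => θ i) '' reach G S h = (fun θ => θ i) '' reach G S h' :=
  perfectRecall_reach_proj_eq_general G hPR S i h h' hnt hnt' hp hp' hinfo hne hne'

end SeqMech
end
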